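/- Let (X, Y, z₀) be a good anchored pair of sequences of size n in which X and Y satisfy the Petrov conditions and n^{0.9} ≤ z₀ ≤ n − n^{0.9}. Define z₁ = pos_L(ct_D(z₀)), z₂ = pos_U(ct_L(n) − ct_D(z₀)), z₃ = pos_R(ct_D(n) − ct_D(z₀)). Then |z₁ − z₀| < 10·n^{0.6}, |z₂ − z₃| < 10·n^{0.6}, and |n − z₀ − z₂| < 10·n^{0.6}. -/
import Mathlib


def ct (X : ℕ → Bool) (b : Bool) (i : ℕ) : ℕ :=
  ((Finset.Icc 1 i).filter (fun k => X k = b)).card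

noncomputable def pos (X : ℕ → Bool) (n : ℕ) (b : Bool) (k : ℕ) : ℕ :=
  if k ≤ ct X b n then sInf {j | ct X b j = k} else n

/-- The Petrov conditions for the label `b` in a word `X` of length `n`
(positions one-indexed; `j = 0` is allowed, with `ct b 0 = pos b 0 = 0`). -/
def PetrovLabel (X : ℕ → Bool) (n : ℕ) (b : Bool) : Prop :=
  (∀ i j : ℕ, i ≤ n → j ≤ n → |(i : ℝ) - j| < (n : ℝ) ^ (0.6 : ℝ) →
    |(ct X b i : ℝ) - ct X b j - ((i : ℝ) - j) / 2| < (n : ℝ) ^ (0.4 : ℝ)) ∧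
  (∀ i j : ℕ, i ≤ n → j ≤ n → |(i : ℝ) - j| > (n : ℝ) ^ (0.3 : ℝ) →
    |(ct X b i : ℝ) - ct X b j - ((i : ℝ) - j) / 2| < |(i : ℝ) - j| ^ (0.6 : ℝ) / 2) ∧
  (∀ i j : ℕ, i ≤ ct X b n → j ≤ ct X b n → |(i : ℝ) - j| < (n : ℝ) ^ (0.6 : ℝ) →
    |(pos X n b i : ℝ) - pos X n b j - 2 * ((i : ℝ) - j)| < (n : ℝ) ^ (0.4 : ℝ)) ∧
  (∀ i j : ℕ, i ≤ ct X b n → j ≤ ct X b n → |(i : ℝ) - j| > (n : ℝ) ^ (0.3 : ℝ) →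
    |(pos X n b i : ℝ) - pos X n b j - 2 * ((i : ℝ) - j)| < 2 * |(i : ℝ) - j| ^ (0.6 : ℝ))

/-- The Petrov conditions for a word `X ∈ {U,D}^n`: they hold for both labels
(`true` encodes `D`, `false` encodes `U`). -/
def Petrov (X : ℕ → Bool) (n : ℕ) : Prop := PetrovLabel X n true ∧ PetrovLabel X n false


lemma ct_zero (X : ℕ → Bool) (b : Bool) : ct X b 0 = 0 := by
  simp [ct]

lemma ct_mono (X : ℕ → Bool) (b : Bool) {i j : ℕ} (h : i ≤ j) : ct X b i ≤ ct X b j :=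
  Finset.card_le_card (Finset.filter_subset_filter _ (Finset.Icc_subset_Icc_right h))

lemma ct_add (X : ℕ → Bool) (n : ℕ) : ct X true n + ct X false n = n := by
  unfold ct
  have h := Finset.card_filter_add_card_filter_not
    (s := Finset.Icc 1 n) (p := fun k => X k = true)
  simp only [Bool.not_eq_true] at h
  rw [h, Nat.card_Icc]; omega

lemma pos_zero (X : ℕ → Bool) (n : ℕ) (b : Bool) : pos X n b 0 = 0 := by
  simp only [pos, Nat.zero_le, if_true]
  exact Nat.sInf_eq_zero.mpr (Or.inl (ct_zero X b))

lemma ct_half (X : ℕ → Bool) (n : ℕ) (b : Bool) (hP : PetrovLabel X n b)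
    (hn2 : (2:ℝ) ≤ (n:ℝ)) (h02 : (2:ℝ) ≤ (n:ℝ)^(0.2:ℝ)) :
    ∀ i : ℕ, i ≤ n → |(ct X b i : ℝ) - i/2| < (n:ℝ)^(0.6:ℝ)/2 := by
  intro i hi
  obtain ⟨h1, h2, -, -⟩ := hP
  have hN : (0:ℝ) < n := by linarith
  by_cases hc : (i:ℝ) < (n:ℝ)^(0.6:ℝ)
  · have h := h1 i 0 hi (Nat.zero_le n) (by simpa using hc)
    simp only [ct_zero, Nat.cast_zero, sub_zero] at h
    have e : (n:ℝ)^(0.6:ℝ) = (n:ℝ)^(0.4:ℝ) * (n:ℝ)^(0.2:ℝ) := by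
      rw [← Real.rpow_add hN]; norm_num
    have h04 : (0:ℝ) < (n:ℝ)^(0.4:ℝ) := Real.rpow_pos_of_pos hN _
    nlinarith
  · push_neg at hc
    have h63 : (n:ℝ)^(0.3:ℝ) < (n:ℝ)^(0.6:ℝ) :=
      (Real.rpow_lt_rpow_left_iff (by linarith)).mpr (by norm_num)
    have h := h2 i 0 hi (Nat.zero_le n) (by simpa using lt_of_lt_of_le h63 hc)
    simp only [ct_zero, Nat.cast_zero, sub_zero, Nat.abs_cast] at h
    have hle : (i:ℝ)^(0.6:ℝ) ≤ (n:ℝ)^(0.6:ℝ) :=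
      Real.rpow_le_rpow (Nat.cast_nonneg i) (Nat.cast_le.mpr hi) (by norm_num)
    linarith

lemma pos_bound (X : ℕ → Bool) (n : ℕ) (b : Bool) (hP : PetrovLabel X n b)
    (hn2 : (2:ℝ) ≤ (n:ℝ)) (k : ℕ) (hk : k ≤ ct X b n) (hk9 : (k:ℝ) ≤ 9*(n:ℝ)/16) :
    |(pos X n b k : ℝ) - 2*k| < 3/2 * (n:ℝ)^(0.6:ℝ) := by
  obtain ⟨-, -, h3, h4⟩ := hP
  have hN : (0:ℝ) < n := by linarith
  by_cases hc : (k:ℝ) < (n:ℝ)^(0.6:ℝ)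
  · have h := h3 k 0 hk (Nat.zero_le _) (by simpa using hc)
    simp only [pos_zero, Nat.cast_zero, sub_zero, mul_comm] at h
    have h46 : (n:ℝ)^(0.4:ℝ) ≤ (n:ℝ)^(0.6:ℝ) :=
      Real.rpow_le_rpow_of_exponent_le (by linarith) (by norm_num)
    have hs : 0 < (n:ℝ)^(0.6:ℝ) := Real.rpow_pos_of_pos hN _
    rw [show ((k:ℝ)*2) = 2*(k:ℝ) by ring] at h
    linarith
  · push_neg at hc
    have h63 : (n:ℝ)^(0.3:ℝ) < (n:ℝ)^(0.6:ℝ) :=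
      (Real.rpow_lt_rpow_left_iff (by linarith)).mpr (by norm_num)
    have h := h4 k 0 hk (Nat.zero_le _) (by simpa using lt_of_lt_of_le h63 hc)
    simp only [pos_zero, Nat.cast_zero, sub_zero, Nat.abs_cast] at h
    have hkb : (k:ℝ)^(0.6:ℝ) ≤ (9*(n:ℝ)/16)^(0.6:ℝ) :=
      Real.rpow_le_rpow (Nat.cast_nonneg k) hk9 (by norm_num)
    have e : (9*(n:ℝ)/16)^(0.6:ℝ) = ((9:ℝ)/16)^(0.6:ℝ) * (n:ℝ)^(0.6:ℝ) := by
      rw [show 9*(n:ℝ)/16 = (9/16)*(n:ℝ) by ring,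
        Real.mul_rpow (by norm_num) (le_of_lt hN)]
    have c34 : ((9:ℝ)/16)^(0.6:ℝ) ≤ 3/4 := by
      have key : (((9:ℝ)/16)^(0.6:ℝ))^(5:ℕ) = ((9:ℝ)/16)^(3:ℕ) := by
        rw [← Real.rpow_natCast (((9:ℝ)/16)^(0.6:ℝ)) 5, ← Real.rpow_mul (by norm_num),
          ← Real.rpow_natCast ((9:ℝ)/16) 3]
        norm_num
      have hle : (((9:ℝ)/16)^(0.6:ℝ))^(5:ℕ) ≤ ((3:ℝ)/4)^(5:ℕ) := by
        rw [key]; norm_num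
      exact le_of_pow_le_pow_left₀ (by norm_num) (by norm_num) hle
    have hs : 0 < (n:ℝ)^(0.6:ℝ) := Real.rpow_pos_of_pos hN _
    nlinarith

set_option maxHeartbeats 1000000 in
/-- Lemma `okz`: for a regular anchored pair `(X, Y, z₀)` (good, both `X` and
`Y` satisfying the Petrov conditions, `n^{0.9} ≤ z₀ ≤ n − n^{0.9}`), the points
`z₁ = pos_L(ct_D(z₀))`, `z₂ = pos_U(ct_L(n) − ct_D(z₀))`,
`z₃ = pos_R(ct_D(n) − ct_D(z₀))` satisfy
`|z₁ − z₀| < 10 n^{0.6}`, `|z₂ − z₃| < 10 n^{0.6}` and `|n − z₀ − z₂| < 10 n^{0.6}`.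
In `X`, `true` encodes `D` and `false` encodes `U`; in `Y`, `true` encodes `L`
and `false` encodes `R`. -/
theorem okz (n : ℕ) (X Y : ℕ → Bool) (z₀ : ℕ)
    (hgood : X 1 = true ∧ X n = true ∧ X z₀ = true ∧ Y 1 = true ∧ Y n = true)
    (hz₀n : 1 ≤ z₀ ∧ z₀ ≤ n)
    (hX : Petrov X n) (hY : Petrov Y n)
    (hz : (n : ℝ) ^ (0.9 : ℝ) ≤ z₀ ∧ (z₀ : ℝ) ≤ (n : ℝ) - (n : ℝ) ^ (0.9 : ℝ)) :
    |(pos Y n true (ct X true z₀) : ℝ) - z₀| < 10 * (n : ℝ) ^ (0.6 : ℝ) ∧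
    |(pos X n false (ct Y true n - ct X true z₀) : ℝ) -
        (pos Y n false (ct X true n - ct X true z₀) : ℝ)| < 10 * (n : ℝ) ^ (0.6 : ℝ) ∧
    |(n : ℝ) - z₀ - (pos X n false (ct Y true n - ct X true z₀) : ℝ)| <
        10 * (n : ℝ) ^ (0.6 : ℝ) := by
  obtain ⟨hz1, hz2⟩ := hz
  obtain ⟨hz01, hz0n⟩ := hz₀n
  have hn1 : (1:ℝ) ≤ (n:ℝ) := by
    have : (1:ℕ) ≤ n := le_trans hz01 hz0n
    exact_mod_cast this
  have hNpos : (0:ℝ) < (n:ℝ) := by linarith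
  have h91 : (1:ℝ) ≤ (n:ℝ)^(0.9:ℝ) := Real.one_le_rpow hn1 (by norm_num)
  have hz0pos : (1:ℝ) ≤ (z₀:ℝ) := by exact_mod_cast hz01
  have hn2 : (2:ℝ) ≤ (n:ℝ) := by linarith
  -- N^{0.1} ≥ 2
  have e91 : (n:ℝ)^(0.9:ℝ) * (n:ℝ)^(0.1:ℝ) = (n:ℝ) := by
    rw [← Real.rpow_add hNpos]; norm_num
  have h9pos : (0:ℝ) < (n:ℝ)^(0.9:ℝ) := Real.rpow_pos_of_pos hNpos _
  have h01 : (2:ℝ) ≤ (n:ℝ)^(0.1:ℝ) := by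
    by_contra hcon
    push_neg at hcon
    nlinarith
  have h1pos : (0:ℝ) < (n:ℝ)^(0.1:ℝ) := Real.rpow_pos_of_pos hNpos _
  have e02 : (n:ℝ)^(0.1:ℝ) * (n:ℝ)^(0.1:ℝ) = (n:ℝ)^(0.2:ℝ) := by
    rw [← Real.rpow_add hNpos]; norm_num
  have h02 : (2:ℝ) ≤ (n:ℝ)^(0.2:ℝ) := by nlinarith
  have h2pos : (0:ℝ) < (n:ℝ)^(0.2:ℝ) := Real.rpow_pos_of_pos hNpos _
  have e03 : (n:ℝ)^(0.2:ℝ) * (n:ℝ)^(0.1:ℝ) = (n:ℝ)^(0.3:ℝ) := by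
    rw [← Real.rpow_add hNpos]; norm_num
  have h03 : (8:ℝ) ≤ (n:ℝ)^(0.3:ℝ) := by nlinarith
  have h3pos : (0:ℝ) < (n:ℝ)^(0.3:ℝ) := Real.rpow_pos_of_pos hNpos _
  have e04 : (n:ℝ)^(0.3:ℝ) * (n:ℝ)^(0.1:ℝ) = (n:ℝ)^(0.4:ℝ) := by
    rw [← Real.rpow_add hNpos]; norm_num
  have h04 : (16:ℝ) ≤ (n:ℝ)^(0.4:ℝ) := by nlinarith
  set s : ℝ := (n:ℝ)^(0.6:ℝ) with hs_def
  have hspos : (0:ℝ) < s := Real.rpow_pos_of_pos hNpos _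
  -- s ≤ n/16
  have e64 : s * (n:ℝ)^(0.4:ℝ) = (n:ℝ) := by
    rw [hs_def, ← Real.rpow_add hNpos]; norm_num
  have hs16 : 16 * s ≤ (n:ℝ) := by nlinarith
  -- n^{0.9} ≥ 8 s
  have e93 : s * (n:ℝ)^(0.3:ℝ) = (n:ℝ)^(0.9:ℝ) := by
    rw [hs_def, ← Real.rpow_add hNpos]; norm_num
  have h98s : 8 * s ≤ (n:ℝ)^(0.9:ℝ) := by nlinarith
  -- ct bounds
  have hctD := ct_half X n true hX.1 hn2 h02
  have hctU := ct_half X n false hX.2 hn2 h02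
  have hctL := ct_half Y n true hY.1 hn2 h02
  have hctR := ct_half Y n false hY.2 hn2 h02
  obtain ⟨A1l, A1r⟩ := abs_lt.mp (hctD z₀ hz0n)
  obtain ⟨A2l, A2r⟩ := abs_lt.mp (hctD n le_rfl)
  obtain ⟨A3l, A3r⟩ := abs_lt.mp (hctL n le_rfl)
  -- ℕ inequalities
  have hkL : ct X true z₀ ≤ ct Y true n := by
    have : (ct X true z₀ : ℝ) ≤ (ct Y true n : ℝ) := by linarith
    exact_mod_cast this
  have hkD : ct X true z₀ ≤ ct X true n := ct_mono X true hz0n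
  have hctUval : (ct X false n : ℝ) = (n:ℝ) - ct X true n := by
    have := ct_add X n
    have : ((ct X true n : ℕ) : ℝ) + ct X false n = n := by exact_mod_cast this
    linarith
  have hctRval : (ct Y false n : ℝ) = (n:ℝ) - ct Y true n := by
    have := ct_add Y n
    have : ((ct Y true n : ℕ) : ℝ) + ct Y false n = n := by exact_mod_cast this
    linarith
  have hm'U : ct Y true n - ct X true z₀ ≤ ct X false n := by
    have hr : (ct Y true n : ℝ) - ct X true z₀ ≤ (ct X false n : ℝ) := by
      rw [hctUval]; linarith
    have : ((ct Y true n - ct X true z₀ : ℕ) : ℝ) ≤ (ct X false n : ℝ) := by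
      rw [Nat.cast_sub hkL]; exact hr
    exact_mod_cast this
  have hmR : ct X true n - ct X true z₀ ≤ ct Y false n := by
    have hr : (ct X true n : ℝ) - ct X true z₀ ≤ (ct Y false n : ℝ) := by
      rw [hctRval]; linarith
    have : ((ct X true n - ct X true z₀ : ℕ) : ℝ) ≤ (ct Y false n : ℝ) := by
      rw [Nat.cast_sub hkD]; exact hr
    exact_mod_cast this
  -- pos bounds
  have P1 := pos_bound Y n true hY.1 hn2 (ct X true z₀) hkL (by linarith)
  have P2 := pos_bound X n false hX.2 hn2 (ct Y true n - ct X true z₀) hm'U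
    (by rw [Nat.cast_sub hkL]; linarith)
  have P3 := pos_bound Y n false hY.2 hn2 (ct X true n - ct X true z₀) hmR
    (by rw [Nat.cast_sub hkD]; linarith)
  rw [Nat.cast_sub hkL] at P2
  rw [Nat.cast_sub hkD] at P3
  obtain ⟨P1l, P1r⟩ := abs_lt.mp P1
  obtain ⟨P2l, P2r⟩ := abs_lt.mp P2
  obtain ⟨P3l, P3r⟩ := abs_lt.mp P3
  refine ⟨?_, ?_, ?_⟩
  · rw [abs_lt]; constructor <;> linarith
  · rw [abs_lt]; constructor <;> linarith
  · rw [abs_lt]; constructor <;> linarith
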